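/- arXiv:2312.13148 — 3 statements merged into one kernel-verified Lean document; each statement's English description precedes it below -/
import Mathlib

section
/- Let P be a symmetric positive definite matrix partitioned into K×K blocks (K ≥ 1), and let P̃ be the block-diagonal matrix containing the diagonal blocks of P. Then the minimum eigenvalue of P P̃^{-1} is at most 1. -/
/-! With `S = Q^{1/2}`, the matrix `P Q⁻¹ = S (S⁻¹ P S⁻¹) S⁻¹` is similar to the Hermitian
matrix `S⁻¹ P S⁻¹`, so a lower bound `c` on its spectrum gives `c • 1 ≤ S⁻¹ P S⁻¹`, i.e.
`c • Q ≤ P` in the Loewner order. For `Q = P̃` the diagonal entries of `Q` and `P` agree and are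
positive, so comparing one diagonal entry of `c • P̃ ≤ P` forces `c ≤ 1`. -/

open Matrix

/-- The block-diagonal part of a matrix indexed by a sigma type `(k : Fin K) × Fin (m k)`:
entries are kept iff the row and column indices lie in the same block. -/
noncomputable def blockDiagPart {K : ℕ} {m : Fin K → ℕ}
    (P : Matrix ((k : Fin K) × Fin (m k)) ((k : Fin K) × Fin (m k)) ℝ) :
    Matrix ((k : Fin K) × Fin (m k)) ((k : Fin K) × Fin (m k)) ℝ :=
  Matrix.of fun i j => if i.1 = j.1 then P i j else 0

open scoped MatrixOrder ComplexOrder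

namespace Matrix

theorem smul_le_of_le_spectrum_mul_inv {n 𝕜 : Type*} [Fintype n] [DecidableEq n] [RCLike 𝕜]
    {P Q : Matrix n n 𝕜} (hP : P.IsHermitian) (hQ : Q.PosDef) {c : ℝ}
    (hc : ∀ x ∈ spectrum ℝ (P * Q⁻¹), c ≤ x) : c • Q ≤ P := by
  have hQ₀ : 0 ≤ Q := hQ.posSemidef.nonneg
  obtain ⟨u, hu⟩ : IsUnit (CFC.sqrt Q) := (CFC.isUnit_sqrt_iff Q).mpr hQ.isUnit
  have huu : (u : Matrix n n 𝕜) * u = Q := hu ▸ CFC.sqrt_mul_sqrt_self Q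
  have hu_sa : IsSelfAdjoint (u : Matrix n n 𝕜) := hu ▸ (CFC.sqrt_nonneg Q).isSelfAdjoint
  have hu_inv_sa : IsSelfAdjoint u⁻¹.val := by
    rw [coe_units_inv]
    exact IsHermitian.inv hu_sa
  set A : Matrix n n 𝕜 := u⁻¹.val * P * u⁻¹.val
  have hspec : spectrum ℝ (P * Q⁻¹) = spectrum ℝ A := by
    have hconj : P * Q⁻¹ = u.val * A * u⁻¹.val := by
      rw [← huu, ← Units.val_mul, ← coe_units_inv]
      simp [A, mul_assoc]
    rw [hconj, spectrum.units_conjugate]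
  have hcA : algebraMap ℝ _ c ≤ A :=
    algebraMap_le_of_le_spectrum (hspec ▸ hc) (hP.isSelfAdjoint.conjugate_self hu_inv_sa)
  simpa [hu_sa.star_eq, A, ← huu, Algebra.algebraMap_eq_smul_one, mul_assoc] using
    star_left_conjugate_le_conjugate hcA u.val

variable {K : ℕ} {m : Fin K → ℕ} {P : Matrix ((k : Fin K) × Fin (m k)) ((k : Fin K) × Fin (m k)) ℝ}

theorem blockDiagPart_apply_self (i : (k : Fin K) × Fin (m k)) : blockDiagPart P i i = P i i := by
  simp [blockDiagPart]

theorem blockDiagPart_mulVec_apply (x : (k : Fin K) × Fin (m k) → ℝ) (k : Fin K)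
    (a : Fin (m k)) : (blockDiagPart P *ᵥ x) ⟨k, a⟩ = (P.blockDiag' k *ᵥ fun b => x ⟨k, b⟩) a := by
  simp only [mulVec, dotProduct, blockDiagPart, of_apply, Fintype.sum_sigma, ite_mul, zero_mul]
  rw [Finset.sum_eq_single k (fun k' _ hk' => by simp [Ne.symm hk']) (by simp)]
  simp [blockDiag'_apply]

theorem dotProduct_blockDiagPart_mulVec (x : (k : Fin K) × Fin (m k) → ℝ) :
    x ⬝ᵥ blockDiagPart P *ᵥ x =
      ∑ k, (fun a => x ⟨k, a⟩) ⬝ᵥ P.blockDiag' k *ᵥ fun a => x ⟨k, a⟩ := by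
  simp only [dotProduct, Fintype.sum_sigma, blockDiagPart_mulVec_apply]

theorem IsHermitian.blockDiagPart (hP : P.IsHermitian) : (blockDiagPart P).IsHermitian := by
  ext i j
  simp only [_root_.blockDiagPart, conjTranspose_apply, of_apply, star_trivial,
    eq_comm (a := j.1)]
  split_ifs <;> simp [← hP.apply i j]

theorem PosDef.blockDiagPart (hP : P.PosDef) : (blockDiagPart P).PosDef := by
  refine .of_dotProduct_mulVec_pos hP.isHermitian.blockDiagPart fun x hx => ?_
  have hblock k : (P.blockDiag' k).PosDef := hP.submatrix sigma_mk_injective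
  obtain ⟨i, hi⟩ := Function.ne_iff.mp hx
  rw [star_trivial, dotProduct_blockDiagPart_mulVec]
  refine Finset.sum_pos'
    (fun k _ => by simpa using (hblock k).posSemidef.dotProduct_mulVec_nonneg _)
    ⟨i.1, Finset.mem_univ _, ?_⟩
  simpa using (hblock i.1).dotProduct_mulVec_pos (Function.ne_iff.mpr ⟨i.2, hi⟩)

end Matrix

theorem stmt1_general {K : ℕ} {m : Fin K → ℕ}
    (P : Matrix ((k : Fin K) × Fin (m k)) ((k : Fin K) × Fin (m k)) ℝ)
    (hP : P.PosDef) :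
    sInf (spectrum ℝ (P * (blockDiagPart P)⁻¹)) ≤ 1 := by
  rcases isEmpty_or_nonempty ((k : Fin K) × Fin (m k)) with _ | ⟨⟨i⟩⟩
  · -- with no indices the spectrum is empty, and `sInf ∅ = 0`
    simp [spectrum.of_subsingleton]
  have hle : sInf (spectrum ℝ (P * (blockDiagPart P)⁻¹)) • blockDiagPart P ≤ P :=
    smul_le_of_le_spectrum_mul_inv hP.isHermitian hP.blockDiagPart
      fun _ hx => csInf_le (finite_spectrum _).bddBelow hx
  have hii := (le_iff.mp hle).diag_nonneg (i := i)
  rw [Matrix.sub_apply, Matrix.smul_apply, blockDiagPart_apply_self, smul_eq_mul] at hii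
  nlinarith [hP.diag_pos (i := i)]

/-- If `P` is symmetric positive definite, partitioned into `K × K` blocks
(`K ≥ 1`), and `P̃` is the block-diagonal matrix of its diagonal blocks, then the minimum
eigenvalue of `P * P̃⁻¹` (all of whose eigenvalues are real) is at most `1`. -/
theorem stmt1 {K : ℕ} (hK : 1 ≤ K) {m : Fin K → ℕ}
    (P : Matrix ((k : Fin K) × Fin (m k)) ((k : Fin K) × Fin (m k)) ℝ)
    (hP : P.PosDef) :
    sInf (spectrum ℝ (P * (blockDiagPart P)⁻¹)) ≤ 1 :=
  stmt1_general P hP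
end

section
/- Let Q be a symmetric positive definite p×p matrix partitioned into K blocks with each diagonal block equal to the identity. Define V(m) = (1/2) mᵀ Q m. For the random-scan coordinate minimization that at each step picks a block k uniformly at random and minimizes V over that block (setting m_k ← m_k − (Qm)_k), the conditional expectation satisfies E[V(m_{s+1}) | m_s] = V(m_s) − (1/(2K)) m_sᵀ Q² m_s ≤ (1 − λ_min(Q)/K) V(m_s). -/
/-!
Write `g_k` for the restriction of `Qv` to block `k`, so that the block-`k` update is `v - g_k`.
Because the `k`-th diagonal block of `Q` is the identity, `g_kᵀ Q g_k = g_kᵀ Q v = ‖g_k‖²`, hence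
the update lowers `V` by exactly `‖g_k‖² / 2`. The `g_k` partition `Qv`, so averaging over `k`
gives the decrease `‖Qv‖² / (2K) = vᵀ Q² v / (2K)`. In an orthonormal eigenbasis of `Q`,
`vᵀ Q² v = ∑ λᵢ² uᵢ² ≥ λ_min ∑ λᵢ uᵢ² = 2 λ_min V(v)`, as every `λᵢ` is nonnegative.
-/

open Matrix

/-- The quadratic objective `V(m) = (1/2) mᵀ Q m`. -/
noncomputable def quadV {K : ℕ} {m : Fin K → ℕ}
    (Q : Matrix ((k : Fin K) × Fin (m k)) ((k : Fin K) × Fin (m k)) ℝ)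
    (v : (k : Fin K) × Fin (m k) → ℝ) : ℝ :=
  (1 / 2) * (v ⬝ᵥ Q *ᵥ v)

/-- The coordinate minimization of `V` over block `k` (other blocks fixed), which for
identity diagonal blocks replaces `m_k` by `m_k - (Qm)_k`. -/
noncomputable def blockUpdate {K : ℕ} {m : Fin K → ℕ}
    (Q : Matrix ((k : Fin K) × Fin (m k)) ((k : Fin K) × Fin (m k)) ℝ)
    (k : Fin K) (v : (k : Fin K) × Fin (m k) → ℝ) : (k : Fin K) × Fin (m k) → ℝ :=
  fun i => if i.1 = k then v i - (Q *ᵥ v) i else v i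

namespace Matrix

variable {n : Type*} [Fintype n]

section Spectral

variable [DecidableEq n]

lemma dotProduct_conj_diagonal_mulVec (U : Matrix n n ℝ) (e x : n → ℝ) :
    x ⬝ᵥ (U * diagonal e * Uᵀ) *ᵥ x = ∑ i, e i * (Uᵀ *ᵥ x) i ^ 2 := by
  rw [← mulVec_mulVec, ← mulVec_mulVec, dotProduct_mulVec, ← mulVec_transpose, dotProduct]
  simp only [mulVec_diagonal]
  exact Finset.sum_congr rfl fun i _ => by ring

lemma conj_diagonal_mul_self {U : Matrix n n ℝ} (hU : Uᵀ * U = 1) (e : n → ℝ) :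
    U * diagonal e * Uᵀ * (U * diagonal e * Uᵀ) = U * diagonal (e ^ 2) * Uᵀ := by
  calc U * diagonal e * Uᵀ * (U * diagonal e * Uᵀ)
      = U * (diagonal e * (Uᵀ * U) * diagonal e) * Uᵀ := by simp only [Matrix.mul_assoc]
    _ = U * diagonal (e ^ 2) * Uᵀ := by rw [hU, Matrix.mul_one, diagonal_mul_diagonal, sq]; rfl

namespace IsHermitian

variable {Q : Matrix n n ℝ} (hQ : Q.IsHermitian)

lemma transpose_eigenvectorUnitary_mul_self :
    (hQ.eigenvectorUnitary : Matrix n n ℝ)ᵀ * hQ.eigenvectorUnitary = 1 := by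
  rw [← conjTranspose_eq_transpose_of_trivial, ← star_eq_conjTranspose]
  exact Unitary.coe_star_mul_self hQ.eigenvectorUnitary

lemma eq_conj_diagonal_eigenvalues :
    Q = (hQ.eigenvectorUnitary : Matrix n n ℝ) * diagonal hQ.eigenvalues *
      (hQ.eigenvectorUnitary : Matrix n n ℝ)ᵀ := by
  conv_lhs => rw [hQ.spectral_theorem, Unitary.conjStarAlgAut_apply]
  rw [star_eq_conjTranspose, conjTranspose_eq_transpose_of_trivial]
  rfl

lemma dotProduct_mulVec_eq_sum_eigenvalues (v : n → ℝ) :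
    v ⬝ᵥ Q *ᵥ v =
      ∑ i, hQ.eigenvalues i * ((hQ.eigenvectorUnitary : Matrix n n ℝ)ᵀ *ᵥ v) i ^ 2 := by
  conv_lhs => rw [hQ.eq_conj_diagonal_eigenvalues]
  exact dotProduct_conj_diagonal_mulVec _ _ _

lemma dotProduct_mul_self_mulVec_eq_sum_eigenvalues_sq (v : n → ℝ) :
    v ⬝ᵥ (Q * Q) *ᵥ v =
      ∑ i, hQ.eigenvalues i ^ 2 * ((hQ.eigenvectorUnitary : Matrix n n ℝ)ᵀ *ᵥ v) i ^ 2 := by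
  conv_lhs => rw [hQ.eq_conj_diagonal_eigenvalues,
    conj_diagonal_mul_self hQ.transpose_eigenvectorUnitary_mul_self]
  exact dotProduct_conj_diagonal_mulVec _ _ _

end IsHermitian

lemma PosSemidef.sInf_spectrum_mul_dotProduct_mulVec_le {Q : Matrix n n ℝ}
    (hQ : Q.PosSemidef) (v : n → ℝ) :
    sInf (spectrum ℝ Q) * (v ⬝ᵥ Q *ᵥ v) ≤ v ⬝ᵥ (Q * Q) *ᵥ v := by
  rw [hQ.1.dotProduct_mulVec_eq_sum_eigenvalues,
    hQ.1.dotProduct_mul_self_mulVec_eq_sum_eigenvalues_sq, Finset.mul_sum]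
  refine Finset.sum_le_sum fun i _ => ?_
  have hmin : sInf (spectrum ℝ Q) ≤ hQ.1.eigenvalues i :=
    csInf_le Q.finite_real_spectrum.bddBelow (hQ.1.eigenvalues_mem_spectrum_real i)
  have hnonneg := hQ.eigenvalues_nonneg i
  rw [← mul_assoc, sq (hQ.1.eigenvalues i)]
  gcongr

end Spectral

namespace IsSymm

variable {Q : Matrix n n ℝ}

lemma sub_dotProduct_mulVec_sub (hQ : Q.IsSymm) (v g : n → ℝ) :
    (v - g) ⬝ᵥ Q *ᵥ (v - g) = v ⬝ᵥ Q *ᵥ v - 2 * (g ⬝ᵥ Q *ᵥ v) + g ⬝ᵥ Q *ᵥ g := by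
  have hswap : v ⬝ᵥ Q *ᵥ g = g ⬝ᵥ Q *ᵥ v := by
    rw [dotProduct_mulVec, ← mulVec_transpose, hQ.eq, dotProduct_comm]
  simp only [mulVec_sub, sub_dotProduct, dotProduct_sub, hswap]
  ring

lemma dotProduct_mul_self_mulVec (hQ : Q.IsSymm) (v : n → ℝ) :
    v ⬝ᵥ (Q * Q) *ᵥ v = Q *ᵥ v ⬝ᵥ Q *ᵥ v := by
  rw [← mulVec_mulVec, dotProduct_mulVec, ← mulVec_transpose, hQ.eq]

end IsSymm

end Matrix

section Blocks

variable {ι : Type*} [Fintype ι] [DecidableEq ι] {α : ι → Type*} [∀ k, Fintype (α k)]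

def blockRestrict (k : ι) (w : (Σ k, α k) → ℝ) : (Σ k, α k) → ℝ :=
  fun i => if i.1 = k then w i else 0

lemma blockRestrict_dotProduct (k : ι) (x y : (Σ k, α k) → ℝ) :
    blockRestrict k x ⬝ᵥ y = blockRestrict k x ⬝ᵥ blockRestrict k y := by
  refine Finset.sum_congr rfl fun i _ => ?_
  by_cases hi : i.1 = k <;> simp [blockRestrict, hi]

lemma sum_blockRestrict_dotProduct_self (w : (Σ k, α k) → ℝ) :
    ∑ k, blockRestrict k w ⬝ᵥ blockRestrict k w = w ⬝ᵥ w := by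
  simp only [dotProduct, blockRestrict, mul_ite, ite_mul, mul_zero]
  rw [Finset.sum_comm]
  simp

lemma blockRestrict_mulVec_blockRestrict [∀ k, DecidableEq (α k)]
    {Q : Matrix (Σ k, α k) (Σ k, α k) ℝ}
    (hdiag : ∀ i j : Σ k, α k, i.1 = j.1 → Q i j = if i = j then 1 else 0)
    (k : ι) (x : (Σ k, α k) → ℝ) :
    blockRestrict k (Q *ᵥ blockRestrict k x) = blockRestrict k x := by
  funext i
  by_cases hi : i.1 = k
  · simp only [blockRestrict, hi, if_true, mulVec, dotProduct]
    rw [Finset.sum_eq_single i]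
    · simp [hdiag i i rfl, hi]
    · intro j _ hj
      by_cases hj' : j.1 = k
      · simp [hdiag i j (hi.trans hj'.symm), Ne.symm hj]
      · simp [hj']
    · simp
  · simp [blockRestrict, hi]

end Blocks

variable {K : ℕ} {d : Fin K → ℕ}
  {Q : Matrix ((k : Fin K) × Fin (d k)) ((k : Fin K) × Fin (d k)) ℝ}

lemma blockUpdate_eq_sub (k : Fin K) (v : (k : Fin K) × Fin (d k) → ℝ) :
    blockUpdate Q k v = v - blockRestrict k (Q *ᵥ v) := by
  funext i
  by_cases hi : i.1 = k <;> simp [blockUpdate, blockRestrict, hi]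

lemma quadV_blockUpdate (hQ : Q.IsSymm)
    (hdiag : ∀ i j : (k : Fin K) × Fin (d k), i.1 = j.1 → Q i j = if i = j then 1 else 0)
    (k : Fin K) (v : (k : Fin K) × Fin (d k) → ℝ) :
    quadV Q (blockUpdate Q k v) =
      quadV Q v - 1 / 2 * (blockRestrict k (Q *ᵥ v) ⬝ᵥ blockRestrict k (Q *ᵥ v)) := by
  set g := blockRestrict k (Q *ᵥ v)
  have hgv : g ⬝ᵥ Q *ᵥ v = g ⬝ᵥ g := blockRestrict_dotProduct k _ _
  have hgg : g ⬝ᵥ Q *ᵥ g = g ⬝ᵥ g := by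
    rw [blockRestrict_dotProduct, blockRestrict_mulVec_blockRestrict hdiag]
  rw [quadV, quadV, blockUpdate_eq_sub, hQ.sub_dotProduct_mulVec_sub, hgv, hgg]
  ring

lemma inv_mul_sum_quadV_blockUpdate (hK : K ≠ 0) (hQ : Q.IsSymm)
    (hdiag : ∀ i j : (k : Fin K) × Fin (d k), i.1 = j.1 → Q i j = if i = j then 1 else 0)
    (v : (k : Fin K) × Fin (d k) → ℝ) :
    (K : ℝ)⁻¹ * ∑ k : Fin K, quadV Q (blockUpdate Q k v)
      = quadV Q v - 1 / (2 * K) * (v ⬝ᵥ (Q * Q) *ᵥ v) := by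
  simp only [quadV_blockUpdate hQ hdiag, Finset.sum_sub_distrib, ← Finset.mul_sum,
    sum_blockRestrict_dotProduct_self, hQ.dotProduct_mul_self_mulVec, Finset.sum_const,
    Finset.card_univ, Fintype.card_fin, nsmul_eq_mul]
  field_simp

/-- Let `Q` be symmetric positive definite, partitioned into `K` blocks with
each diagonal block equal to the identity, and `V(m) = (1/2) mᵀ Q m`. For the random-scan
coordinate minimization that picks a block `k` uniformly at random and minimizes over it,
the conditional expectation satisfies
`E[V(m_{s+1}) | m_s] = V(m_s) - (1/(2K)) m_sᵀ Q² m_s ≤ (1 - λ_min(Q)/K) V(m_s)`. -/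
theorem stmt9 {K : ℕ} (hK : 0 < K) {d : Fin K → ℕ}
    (Q : Matrix ((k : Fin K) × Fin (d k)) ((k : Fin K) × Fin (d k)) ℝ)
    (hQ : Q.PosDef)
    (hdiag : ∀ i j : (k : Fin K) × Fin (d k), i.1 = j.1 → Q i j = if i = j then 1 else 0)
    (v : (k : Fin K) × Fin (d k) → ℝ) :
    (K : ℝ)⁻¹ * ∑ k : Fin K, quadV Q (blockUpdate Q k v)
        = quadV Q v - (1 / (2 * K)) * (v ⬝ᵥ (Q * Q) *ᵥ v) ∧
      (K : ℝ)⁻¹ * ∑ k : Fin K, quadV Q (blockUpdate Q k v)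
        ≤ (1 - sInf (spectrum ℝ Q) / K) * quadV Q v := by
  have hmean := inv_mul_sum_quadV_blockUpdate hK.ne' (isHermitian_iff_isSymm.mp hQ.1) hdiag v
  refine ⟨hmean, ?_⟩
  have hspec := hQ.posSemidef.sInf_spectrum_mul_dotProduct_mulVec_le v
  have hK' : (0 : ℝ) < K := Nat.cast_pos.mpr hK
  rw [hmean, quadV]
  calc 1 / 2 * (v ⬝ᵥ Q *ᵥ v) - 1 / (2 * K) * (v ⬝ᵥ (Q * Q) *ᵥ v)
      ≤ 1 / 2 * (v ⬝ᵥ Q *ᵥ v) - 1 / (2 * K) * (sInf (spectrum ℝ Q) * (v ⬝ᵥ Q *ᵥ v)) := by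
        gcongr
    _ = (1 - sInf (spectrum ℝ Q) / K) * (1 / 2 * (v ⬝ᵥ Q *ᵥ v)) := by
        field_simp
end

section
/- Let Q be symmetric positive definite with identity diagonal blocks (K blocks), V(m) = (1/2)mᵀQm, and let m₀ be an eigenvector of Q corresponding to λ_min(Q). Then for the random-scan coordinate minimization, E[V(m_s)] ≥ (1 − λ_min(Q)/K)^{2s} V(m₀) for all s ≥ 0. -/
/-!
Averaged over the `K` blocks, one update is the linear map `v ↦ v - Q v / K`, so over all
`K ^ s` equally likely scan orders the mean iterate started at the eigenvector `m₀` is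
`(1 - λ_min / K) ^ s • m₀`. The objective `V` is a positive semidefinite quadratic form, hence
convex, and Jensen's inequality gives `E[V(m_s)] ≥ V(E[m_s]) = (1 - λ_min / K) ^ (2 s) V(m₀)`.
-/

open Matrix

theorem Matrix.PosSemidef.convexOn_dotProduct_mulVec {n : Type*} [Fintype n]
    {Q : Matrix n n ℝ} (hQ : Q.PosSemidef) :
    ConvexOn ℝ Set.univ (fun v : n → ℝ => v ⬝ᵥ Q *ᵥ v) := by
  refine ⟨convex_univ, fun x _ y _ a b ha hb hab => ?_⟩
  obtain rfl : b = 1 - a := by linarith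
  have hgap : a * (x ⬝ᵥ Q *ᵥ x) + (1 - a) * (y ⬝ᵥ Q *ᵥ y)
        - (a • x + (1 - a) • y) ⬝ᵥ Q *ᵥ (a • x + (1 - a) • y)
      = a * (1 - a) * ((x - y) ⬝ᵥ Q *ᵥ (x - y)) := by
    simp only [mulVec_add, mulVec_sub, mulVec_smul, add_dotProduct, sub_dotProduct,
      dotProduct_add, dotProduct_sub, smul_dotProduct, dotProduct_smul, smul_eq_mul]
    ring
  have hnonneg : 0 ≤ (x - y) ⬝ᵥ Q *ᵥ (x - y) := by
    simpa using hQ.dotProduct_mulVec_nonneg (x - y)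
  simp only [smul_eq_mul]
  nlinarith [mul_nonneg (mul_nonneg ha hb) hnonneg]

section BlockCoordinate

variable {K : ℕ} {d : Fin K → ℕ}
  (Q : Matrix ((k : Fin K) × Fin (d k)) ((k : Fin K) × Fin (d k)) ℝ)

theorem convexOn_quadV (hQ : Q.PosSemidef) : ConvexOn ℝ Set.univ (quadV Q) :=
  hQ.convexOn_dotProduct_mulVec.smul (by norm_num)

theorem quadV_smul (c : ℝ) (v : (k : Fin K) × Fin (d k) → ℝ) :
    quadV Q (c • v) = c ^ 2 * quadV Q v := by
  simp only [quadV, mulVec_smul, smul_dotProduct, dotProduct_smul, smul_eq_mul]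
  ring

theorem sum_blockUpdate (v : (k : Fin K) × Fin (d k) → ℝ) :
    ∑ k : Fin K, blockUpdate Q k v = (K : ℝ) • v - Q *ᵥ v := by
  ext i
  have hterm : ∀ k, blockUpdate Q k v i = v i - if i.1 = k then (Q *ᵥ v) i else 0 := by
    intro k
    simp only [blockUpdate]
    split_ifs <;> ring
  simp [hterm, Finset.sum_sub_distrib]

theorem foldl_blockUpdate_snoc {s : ℕ} (ks : Fin s → Fin K) (k : Fin K)
    (v : (k : Fin K) × Fin (d k) → ℝ) :
    (List.ofFn (Fin.snoc ks k : Fin (s + 1) → Fin K)).foldl (fun v k => blockUpdate Q k v) v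
      = blockUpdate Q k ((List.ofFn ks).foldl (fun v k => blockUpdate Q k v) v) := by
  rw [List.ofFn_succ']
  simp only [Fin.snoc_castSucc, Fin.snoc_last, List.concat_eq_append, List.foldl_append,
    List.foldl_cons, List.foldl_nil]

theorem sum_foldl_blockUpdate_of_mulVec_eq_smul {m₀ : (k : Fin K) × Fin (d k) → ℝ} {lam : ℝ}
    (heig : Q *ᵥ m₀ = lam • m₀) (s : ℕ) :
    ∑ ks : Fin s → Fin K, (List.ofFn ks).foldl (fun v k => blockUpdate Q k v) m₀
      = ((K : ℝ) - lam) ^ s • m₀ := by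
  induction s with
  | zero => simp
  | succ s ih =>
    rw [← (Fin.snocEquiv fun _ => Fin K).sum_comp
      (fun ks => (List.ofFn ks).foldl (fun v k => blockUpdate Q k v) m₀),
      Fintype.sum_prod_type_right]
    calc ∑ ks : Fin s → Fin K, ∑ k : Fin K,
          (List.ofFn (Fin.snocEquiv (fun _ => Fin K) (k, ks))).foldl
            (fun v k => blockUpdate Q k v) m₀
        = ∑ ks : Fin s → Fin K, ∑ k : Fin K,
            blockUpdate Q k ((List.ofFn ks).foldl (fun v k => blockUpdate Q k v) m₀) :=
          Finset.sum_congr rfl fun ks _ => Finset.sum_congr rfl fun k _ =>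
            foldl_blockUpdate_snoc Q ks k m₀
      _ = (K : ℝ) • ((K : ℝ) - lam) ^ s • m₀ - Q *ᵥ (((K : ℝ) - lam) ^ s • m₀) := by
          simp only [sum_blockUpdate, Finset.sum_sub_distrib, ← Finset.smul_sum, ← mulVec_sum,
            ih]
      _ = ((K : ℝ) - lam) ^ (s + 1) • m₀ := by
          rw [mulVec_smul, heig, smul_smul, smul_smul, ← sub_smul, pow_succ]
          ring_nf

end BlockCoordinate

theorem stmt11_general {K : ℕ} (hK : 0 < K) {d : Fin K → ℕ}
    (Q : Matrix ((k : Fin K) × Fin (d k)) ((k : Fin K) × Fin (d k)) ℝ)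
    (hQ : Q.PosDef)
    (m₀ : (k : Fin K) × Fin (d k) → ℝ)
    (heig : Q *ᵥ m₀ = sInf (spectrum ℝ Q) • m₀) :
    ∀ s : ℕ,
      ((K : ℝ) ^ s)⁻¹ *
          ∑ ks : Fin s → Fin K,
            quadV Q ((List.ofFn ks).foldl (fun v k => blockUpdate Q k v) m₀)
        ≥ (1 - sInf (spectrum ℝ Q) / K) ^ (2 * s) * quadV Q m₀ := by
  intro s
  set lam := sInf (spectrum ℝ Q)
  have hK₀ : (K : ℝ) ≠ 0 := by positivity
  have hweights : ∑ _ks : Fin s → Fin K, ((K : ℝ) ^ s)⁻¹ = 1 := by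
    simp [hK₀]
  have hmean : ∑ ks : Fin s → Fin K,
      ((K : ℝ) ^ s)⁻¹ • (List.ofFn ks).foldl (fun v k => blockUpdate Q k v) m₀
        = (1 - lam / K) ^ s • m₀ := by
    rw [← Finset.smul_sum, sum_foldl_blockUpdate_of_mulVec_eq_smul Q heig, smul_smul,
      ← inv_pow, ← mul_pow]
    congr 2
    field_simp
  calc (1 - lam / K) ^ (2 * s) * quadV Q m₀
      = quadV Q (∑ ks : Fin s → Fin K,
          ((K : ℝ) ^ s)⁻¹ • (List.ofFn ks).foldl (fun v k => blockUpdate Q k v) m₀) := by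
        rw [hmean, quadV_smul, ← pow_mul, mul_comm 2]
    _ ≤ ∑ ks : Fin s → Fin K, ((K : ℝ) ^ s)⁻¹ •
          quadV Q ((List.ofFn ks).foldl (fun v k => blockUpdate Q k v) m₀) :=
        (convexOn_quadV Q hQ.posSemidef).map_sum_le (fun _ _ => by positivity) hweights
          (fun _ _ => Set.mem_univ _)
    _ = _ := by simp only [smul_eq_mul, Finset.mul_sum]

/-- Let `Q` be symmetric positive definite with `K` identity diagonal
blocks, `V(m) = (1/2)mᵀQm`, and let `m₀` be an eigenvector of `Q` corresponding to
`λ_min(Q)`. Then for the random-scan coordinate minimization (the expectation being the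
uniform average over all sequences of `s` block choices),
`E[V(m_s)] ≥ (1 - λ_min(Q)/K)^{2s} V(m₀)` for all `s ≥ 0`. -/
theorem stmt11 {K : ℕ} (hK : 0 < K) {d : Fin K → ℕ}
    (Q : Matrix ((k : Fin K) × Fin (d k)) ((k : Fin K) × Fin (d k)) ℝ)
    (hQ : Q.PosDef)
    (hdiag : ∀ i j : (k : Fin K) × Fin (d k), i.1 = j.1 → Q i j = if i = j then 1 else 0)
    (m₀ : (k : Fin K) × Fin (d k) → ℝ) (hm₀ : m₀ ≠ 0)
    (heig : Q *ᵥ m₀ = sInf (spectrum ℝ Q) • m₀) :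
    ∀ s : ℕ,
      ((K : ℝ) ^ s)⁻¹ *
          ∑ ks : Fin s → Fin K,
            quadV Q ((List.ofFn ks).foldl (fun v k => blockUpdate Q k v) m₀)
        ≥ (1 - sInf (spectrum ℝ Q) / K) ^ (2 * s) * quadV Q m₀ :=
  stmt11_general hK Q hQ m₀ heig
end
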